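/- arXiv:2308.14901 — 3 statements merged into one kernel-verified Lean document; each statement's English description precedes it below -/
import Mathlib

section
/- Let u and v be finite words with |v| < |u|, and let s be the maximal common suffix of the left-infinite words v^∞ and v^∞u. If |s| ≥ |vu|, then u and v are both powers of a common word. -/
/-!
Since `|s| ≥ |vu|`, the word `vu` is a common suffix of `s` and `v^N u`, hence a suffix of some
`v^n = p v u`. Comparing the two factorisations `v p v u = v^(n+1) = p v u v` shows `vu = uv`,
and commuting words are powers of a common word.
-/

/-- `wordPow v n` is the word `v` repeated `n` times. -/
def wordPow {A : Type*} (v : List A) (n : ℕ) : List A := (List.replicate n v).flatten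

section

variable {A : Type*}

lemma wordPow_zero (v : List A) : wordPow v 0 = [] := rfl

lemma wordPow_add (v : List A) (m n : ℕ) :
    wordPow v (m + n) = wordPow v m ++ wordPow v n := by
  simp only [wordPow, List.replicate_add, List.flatten_append]

lemma wordPow_succ (v : List A) (n : ℕ) : wordPow v (n + 1) = wordPow v n ++ v := by
  rw [wordPow_add]
  simp [wordPow]

lemma wordPow_succ' (v : List A) (n : ℕ) : wordPow v (n + 1) = v ++ wordPow v n := by
  rw [add_comm, wordPow_add]
  simp [wordPow]

lemma ne_zero_of_wordPow_ne_nil {t : List A} {m : ℕ} (h : wordPow t m ≠ []) : m ≠ 0 := by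
  rintro rfl
  exact h (wordPow_zero t)

lemma suffix_wordPow_of_length_le {v : List A} {n : ℕ} (h : v.length ≤ (wordPow v n).length) :
    v <:+ wordPow v n := by
  cases n with
  | zero =>
    rw [wordPow_zero, List.length_nil, Nat.le_zero, List.length_eq_zero_iff] at h
    simp [h]
  | succ n => simp [wordPow_succ]

lemma append_comm_of_append_suffix_wordPow {u v : List A} {n : ℕ} (h : v ++ u <:+ wordPow v n) :
    v ++ u = u ++ v := by
  obtain ⟨p, hp⟩ := h
  have hpow : v ++ p ++ (v ++ u) = p ++ v ++ (u ++ v) := by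
    simp only [List.append_assoc] at hp ⊢
    rw [hp, ← wordPow_succ', wordPow_succ, ← hp, List.append_assoc, List.append_assoc]
  exact (List.append_inj hpow (by simp [Nat.add_comm])).2

theorem exists_wordPow_of_append_comm {u v : List A} (h : u ++ v = v ++ u) :
    ∃ (t : List A) (m m' : ℕ), u = wordPow t m ∧ v = wordPow t m' := by
  induction hn : u.length + v.length using Nat.strong_induction_on generalizing u v with
  | _ n ih =>
    wlog huv : u.length ≤ v.length generalizing u v
    · obtain ⟨t, m, m', hu, hv⟩ := this h.symm (by omega) (by omega)
      exact ⟨t, m', m, hv, hu⟩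
    obtain ⟨w, rfl⟩ : u <+: v :=
      List.prefix_of_prefix_length_le (List.prefix_append u v) (h ▸ List.prefix_append v u) huv
    by_cases hu : u = []
    · subst hu
      exact ⟨w, 0, 1, rfl, by simp [wordPow]⟩
    have hw : u ++ w = w ++ u := List.append_cancel_left (h.trans (List.append_assoc u w u))
    have hlt : u.length + w.length < n := by
      have := List.length_pos_iff.mpr hu
      simp only [List.length_append] at hn
      omega
    obtain ⟨t, m, m', rfl, rfl⟩ := ih _ hlt hw rfl
    exact ⟨t, m, m + m', rfl, (wordPow_add t m m').symm⟩

end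

theorem stmt1_general {A : Type*} (u v s : List A) (hv : v ≠ []) (hu : u ≠ [])
    (hs1 : ∃ n : ℕ, s <:+ wordPow v n)
    (hs2 : ∃ n : ℕ, s <:+ wordPow v n ++ u)
    (hbig : v.length + u.length ≤ s.length) :
    ∃ (t : List A) (m m' : ℕ), 1 ≤ m ∧ 1 ≤ m' ∧ u = wordPow t m ∧ v = wordPow t m' := by
  obtain ⟨n, hn⟩ := hs1
  obtain ⟨N, hN⟩ := hs2
  have hvN : v <:+ wordPow v N := by
    apply suffix_wordPow_of_length_le
    have := hN.length_le
    simp only [List.length_append] at this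
    omega
  have hvu : v ++ u <:+ s :=
    List.suffix_of_suffix_length_le (List.suffix_append_self_iff.mpr hvN) hN
      (by simpa using hbig)
  obtain ⟨t, m, m', rfl, rfl⟩ :=
    exists_wordPow_of_append_comm (append_comm_of_append_suffix_wordPow (hvu.trans hn)).symm
  exact ⟨t, m, m', Nat.one_le_iff_ne_zero.mpr (ne_zero_of_wordPow_ne_nil hu),
    Nat.one_le_iff_ne_zero.mpr (ne_zero_of_wordPow_ne_nil hv), rfl, rfl⟩

/-- If `|v| < |u|` and the maximal common suffix `s` of the left-infinite words `v^∞` and `v^∞u`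
satisfies `|s| ≥ |vu|`, then `u` and `v` are both powers of a common word. -/
theorem stmt1 {A : Type*} (u v s : List A) (hv : v ≠ []) (hu : u ≠ [])
    (hlen : v.length < u.length)
    (hs1 : ∃ n : ℕ, s <:+ wordPow v n)
    (hs2 : ∃ n : ℕ, s <:+ wordPow v n ++ u)
    (hmax : ∀ s' : List A, (∃ n : ℕ, s' <:+ wordPow v n) →
      (∃ n : ℕ, s' <:+ wordPow v n ++ u) → s'.length ≤ s.length)
    (hbig : v.length + u.length ≤ s.length) :
    ∃ (t : List A) (m m' : ℕ), 1 ≤ m ∧ 1 ≤ m' ∧ u = wordPow t m ∧ v = wordPow t m' :=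
  stmt1_general u v s hv hu hs1 hs2 hbig
end

section
/- Let λ be a positive real number admitting the generalized continued fraction expansion λ = a_0/(b_0 + a_1/(b_1 + ⋯)) where (a_k), (b_k) are sequences of positive integers, i.e., the sequence λ_k defined by λ_k = a_k/(b_k + λ_{k+1}) with all λ_k ∈ (0, ∞), λ = λ_0. Suppose moreover there exist positive integers v_k with v_{k+1} = b_k v_k + a_k v_{k-1} and ε_k → 0 such that (a_0 ⋯ a_k)/v_{k+1} ≤ ε_k for all k. Then λ is irrational. -/
/-!
Put `Λ_k = λ_0 ⋯ λ_{k-1}`. The relation `λ_k (b_k + λ_{k+1}) = a_k` gives the integer recurrence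
`Λ_{k+2} = a_k Λ_k - b_k Λ_{k+1}` with `Λ_0 = 1`, `Λ_1 = λ`, so if `qλ ∈ ℤ` then every `q Λ_k` is a
positive integer and `Λ_k ≥ 1/q`. On the other hand `t_k = v_{k+1} + λ_{k+1} v_k` satisfies
`λ_{k+1} t_{k+1} = a_{k+1} t_k`, whence `Λ_{k+1} t_k` is a constant multiple of `a_0 ⋯ a_k` and
`Λ_{k+1} ≤ C (a_0 ⋯ a_k) / v_{k+1} → 0`, a contradiction.
-/

open Filter Finset Topology

theorem exists_int_eq_of_linear_rec {x : ℕ → ℝ} (c d : ℕ → ℤ)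
    (hx : ∀ k, x (k + 2) = c k * x k + d k * x (k + 1))
    (h0 : ∃ m : ℤ, x 0 = m) (h1 : ∃ m : ℤ, x 1 = m) (k : ℕ) : ∃ m : ℤ, x k = m := by
  induction k using Nat.twoStepInduction with
  | zero => exact h0
  | one => exact h1
  | more k ihk ihk1 =>
    obtain ⟨m, hm⟩ := ihk
    obtain ⟨n, hn⟩ := ihk1
    exact ⟨c k * m + d k * n, by rw [hx, hm, hn]; push_cast; ring⟩

namespace ContFracTails

variable {a b : ℕ → ℕ} {lam : ℕ → ℝ}

theorem mul_add_eq_of_eq_div (hlampos : ∀ k, 0 < lam k)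
    (hlam : ∀ k, lam k = (a k : ℝ) / ((b k : ℝ) + lam (k + 1))) (k : ℕ) :
    lam k * ((b k : ℝ) + lam (k + 1)) = a k := by
  rw [hlam k, div_mul_cancel₀]
  exact (add_pos_of_nonneg_of_pos (Nat.cast_nonneg _) (hlampos (k + 1))).ne'

/-- The `t_k` of the proof idea: the denominator of the `k`-th complete convergent. -/
def completeDenom (v : ℕ → ℝ) (lam : ℕ → ℝ) (k : ℕ) : ℝ :=
  v (k + 1) + lam (k + 1) * v k

theorem completeDenom_pos {v : ℕ → ℝ} (hlampos : ∀ k, 0 < lam k) (hvpos : ∀ k, 0 < v k) (k : ℕ) :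
    0 < completeDenom v lam k :=
  add_pos (hvpos (k + 1)) (mul_pos (hlampos (k + 1)) (hvpos k))

section

variable (hrec : ∀ k, lam k * ((b k : ℝ) + lam (k + 1)) = a k)
include hrec

theorem prod_range_add_two (k : ℕ) :
    ∏ j ∈ range (k + 2), lam j =
      a k * ∏ j ∈ range k, lam j - b k * ∏ j ∈ range (k + 1), lam j := by
  simp only [prod_range_succ]
  linear_combination (∏ j ∈ range k, lam j) * hrec k

theorem exists_int_eq_mul_prod_range {q n : ℤ} (hn : (n : ℝ) = q * lam 0) (k : ℕ) :
    ∃ m : ℤ, (m : ℝ) = q * ∏ j ∈ range k, lam j := by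
  obtain ⟨m, hm⟩ := exists_int_eq_of_linear_rec (x := fun k => q * ∏ j ∈ range k, lam j)
    (fun k => a k) (fun k => -b k)
    (fun k => by push_cast; rw [prod_range_add_two hrec]; ring)
    ⟨q, by simp⟩ ⟨n, by simp [hn]⟩ k
  exact ⟨m, hm.symm⟩

variable {v : ℕ → ℝ} (hv : ∀ k, v (k + 2) = b (k + 1) * v (k + 1) + a (k + 1) * v k)
include hv

theorem completeDenom_succ (k : ℕ) :
    completeDenom v lam (k + 1) = (b (k + 1) + lam (k + 2)) * completeDenom v lam k := by
  unfold completeDenom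
  rw [hv]
  linear_combination -v k * hrec (k + 1)

theorem prod_range_mul_completeDenom (k : ℕ) :
    (∏ j ∈ range (k + 1), lam j) * completeDenom v lam k * (b 0 + lam 1) =
      completeDenom v lam 0 * ∏ j ∈ range (k + 1), (a j : ℝ) := by
  induction k with
  | zero => simp only [zero_add, range_one, prod_singleton, ← hrec 0]; ring
  | succ k ih =>
    rw [prod_range_succ lam (k + 1), prod_range_succ (fun j => (a j : ℝ)) (k + 1),
      completeDenom_succ hrec hv]
    linear_combination
      (∏ j ∈ range (k + 1), lam j) * completeDenom v lam k * (b 0 + lam 1) * hrec (k + 1) +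
        (a (k + 1) : ℝ) * ih

variable (hlampos : ∀ k, 0 < lam k) (hvpos : ∀ k, 0 < v k) {ε : ℕ → ℝ}
  (hbound : ∀ k, (∏ j ∈ range (k + 1), (a j : ℝ)) / v (k + 1) ≤ ε k)
include hlampos hvpos hbound

theorem prod_range_le_mul (k : ℕ) :
    ∏ j ∈ range (k + 1), lam j ≤ completeDenom v lam 0 / (b 0 + lam 1) * ε k := by
  have hden : 0 < (b 0 : ℝ) + lam 1 := add_pos_of_nonneg_of_pos (Nat.cast_nonneg _) (hlampos 1)
  have hv_le : v (k + 1) ≤ completeDenom v lam k :=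
    le_add_of_nonneg_right (mul_pos (hlampos (k + 1)) (hvpos k)).le
  calc ∏ j ∈ range (k + 1), lam j
      = completeDenom v lam 0 / (b 0 + lam 1) *
          ((∏ j ∈ range (k + 1), (a j : ℝ)) / completeDenom v lam k) := by
        rw [div_mul_div_comm, ← prod_range_mul_completeDenom hrec hv k]
        field_simp [(completeDenom_pos hlampos hvpos k).ne', hden.ne']
    _ ≤ completeDenom v lam 0 / (b 0 + lam 1) * ε k := by
        refine mul_le_mul_of_nonneg_left (le_trans ?_ (hbound k))
          (div_nonneg (completeDenom_pos hlampos hvpos 0).le hden.le)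
        exact div_le_div_of_nonneg_left (by positivity) (hvpos (k + 1)) hv_le

theorem tendsto_prod_range (hε : Tendsto ε atTop (𝓝 0)) :
    Tendsto (fun k => ∏ j ∈ range (k + 1), lam j) atTop (𝓝 0) := by
  refine squeeze_zero (fun k => prod_nonneg fun j _ => (hlampos j).le)
    (prod_range_le_mul hrec hv hlampos hvpos hbound) ?_
  simpa using hε.const_mul (completeDenom v lam 0 / (b 0 + lam 1))

end

end ContFracTails

open ContFracTails in
theorem stmt10_general (a b : ℕ → ℕ)
    (lam : ℕ → ℝ) (hlampos : ∀ k, 0 < lam k)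
    (hlam : ∀ k : ℕ, lam k = (a k : ℝ) / ((b k : ℝ) + lam (k + 1)))
    (v : ℕ → ℕ) (hvpos : ∀ k, 0 < v k)
    (hv : ∀ k : ℕ, 1 ≤ k → v (k + 1) = b k * v k + a k * v (k - 1))
    (ε : ℕ → ℝ) (hε : Filter.Tendsto ε Filter.atTop (nhds 0))
    (hbound : ∀ k : ℕ, (∏ j ∈ Finset.range (k + 1), (a j : ℝ)) / (v (k + 1) : ℝ) ≤ ε k) :
    Irrational (lam 0) := by
  have hrec := mul_add_eq_of_eq_div hlampos hlam
  have hv' (k : ℕ) : (v (k + 2) : ℝ) = b (k + 1) * v (k + 1) + a (k + 1) * v k := by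
    exact_mod_cast hv (k + 1) le_add_self
  have hlim := tendsto_prod_range (v := fun k => (v k : ℝ)) hrec hv' hlampos
    (fun k => Nat.cast_pos.2 (hvpos k)) hbound hε
  rintro ⟨r, hr⟩
  have hnum : (r.num : ℝ) = (r.den : ℤ) * lam 0 := by
    rw [← hr]; exact_mod_cast (Rat.mul_den_eq_num r).symm.trans (mul_comm _ _)
  have hsmall : ∀ᶠ k in atTop, (r.den : ℝ) * ∏ j ∈ range (k + 1), lam j < 1 :=
    (hlim.const_mul (r.den : ℝ)).eventually (gt_mem_nhds (by simp))
  obtain ⟨k, hk⟩ := hsmall.exists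
  obtain ⟨m, hm⟩ := exists_int_eq_mul_prod_range hrec hnum (k + 1)
  have hm_pos : (0 : ℝ) < m := hm ▸ mul_pos (by simp [r.pos]) (prod_pos fun j _ => hlampos j)
  have hm_lt : (m : ℝ) < 1 := by simpa [hm] using hk
  have : (0 : ℤ) < m ∧ m < 1 := ⟨by exact_mod_cast hm_pos, by exact_mod_cast hm_lt⟩
  omega

/-- A positive real admitting a generalized continued fraction expansion
`λ_k = a_k/(b_k + λ_{k+1})` with positive integer partial quotients, together with positive
integers `v_k` satisfying `v_{k+1} = b_k v_k + a_k v_{k-1}` and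
`(a_0 ⋯ a_k)/v_{k+1} ≤ ε_k → 0`, is irrational. -/
theorem stmt10 (a b : ℕ → ℕ) (ha : ∀ k, 0 < a k) (hb : ∀ k, 0 < b k)
    (lam : ℕ → ℝ) (hlampos : ∀ k, 0 < lam k)
    (hlam : ∀ k : ℕ, lam k = (a k : ℝ) / ((b k : ℝ) + lam (k + 1)))
    (v : ℕ → ℕ) (hvpos : ∀ k, 0 < v k)
    (hv : ∀ k : ℕ, 1 ≤ k → v (k + 1) = b k * v k + a k * v (k - 1))
    (ε : ℕ → ℝ) (hε : Filter.Tendsto ε Filter.atTop (nhds 0))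
    (hbound : ∀ k : ℕ, (∏ j ∈ Finset.range (k + 1), (a j : ℝ)) / (v (k + 1) : ℝ) ≤ ε k) :
    Irrational (lam 0) :=
  stmt10_general a b lam hlampos hlam v hvpos hv ε hε hbound
end

section
/- Let χ be a character (group homomorphism to the circle group S¹) of the group Q_{(ℓ_p)} ⊆ ℚ (under addition), where ℓ_p ∈ {0,1,…} ∪ {∞} for each prime. Then there exist a unique θ ∈ [0,1) and unique z_p ∈ ℤ_p (with 0 ≤ z_p < p^{ℓ_p} when ℓ_p < ∞) such that for all q ∈ Q_{(ℓ_p)}, χ(q) = exp(2πi(qθ + Σ_p {q z_p}_p)). -/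
/-!
Write `e(x) = exp(2πix)`. The value `χ(1) = e(θ)` fixes `θ ∈ [0,1)`. As `p^n · (1/p^n) = 1`,
`χ(1/p^n)` is a `p^n`-th root of `e(θ)`, i.e. `e((θ + c_n)/p^n)` with `c_n` determined modulo
`p^n`; raising `χ(1/p^{n'})` to the power `p^{n'-n}` shows `c_{n'} ≡ c_n (mod p^n)`. So the `c_n`
are the residues of a unique `z_p ∈ ℤ_p` (an integer in `[0, p^{ℓ_p})` when `ℓ_p` is finite).
Both sides of the formula are additive in `q`, and they agree on the generators `1/p^n`, because
`{z_p/p^n}_p ≡ c_n/p^n` and `{z_r/p^n}_r = 0` for `r ≠ p`. Conversely, evaluating any representing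
pair `(θ', z')` at `1` and at the `1/p^n` recovers `θ` and the residues `c_n`.
-/

instance (p : Nat.Primes) : Fact (p : ℕ).Prime := ⟨p.property⟩

/-- The `(ℓ_p)`-subgroup `Q_{(ℓ_p)}` of `ℚ`: rationals whose denominator involves each prime
`p` with exponent at most `ℓ_p`; it is generated by the `1/p^n`, `n ≤ ℓ_p`. -/
def Qgrp (ℓ : Nat.Primes → ℕ∞) : AddSubgroup ℚ :=
  AddSubgroup.closure
    {x : ℚ | ∃ (p : Nat.Primes) (n : ℕ), (n : ℕ∞) ≤ ℓ p ∧ x = 1 / ((p : ℕ) : ℚ) ^ n}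

open Complex

noncomputable def expTwoPiI (x : ℂ) : ℂ := exp (2 * Real.pi * I * x)

lemma expTwoPiI_zero : expTwoPiI 0 = 1 := by
  rw [expTwoPiI, mul_zero, exp_zero]

lemma expTwoPiI_add (x y : ℂ) : expTwoPiI (x + y) = expTwoPiI x * expTwoPiI y := by
  rw [expTwoPiI, expTwoPiI, expTwoPiI, ← exp_add, mul_add]

lemma expTwoPiI_neg (x : ℂ) : expTwoPiI (-x) = (expTwoPiI x)⁻¹ := by
  rw [expTwoPiI, expTwoPiI, ← exp_neg, mul_neg]

lemma expTwoPiI_natCast_mul (n : ℕ) (x : ℂ) : expTwoPiI (n * x) = expTwoPiI x ^ n := by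
  rw [expTwoPiI, expTwoPiI, ← exp_nat_mul]
  ring_nf

lemma expTwoPiI_eq_expTwoPiI_iff {x y : ℂ} :
    expTwoPiI x = expTwoPiI y ↔ ∃ k : ℤ, x = y + k := by
  have h : (2 * Real.pi * I : ℂ) ≠ 0 := by simp [Real.pi_ne_zero, I_ne_zero]
  rw [expTwoPiI, expTwoPiI, exp_eq_exp_iff_exists_int]
  refine exists_congr fun k => ?_
  rw [show 2 * Real.pi * I * y + k * (2 * Real.pi * I) = 2 * Real.pi * I * (y + k) by ring,
    mul_right_inj' h]

lemma expTwoPiI_add_intCast (x : ℂ) (k : ℤ) : expTwoPiI (x + k) = expTwoPiI x :=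
  expTwoPiI_eq_expTwoPiI_iff.mpr ⟨k, rfl⟩

lemma exists_mem_Ico_expTwoPiI_eq {w : ℂ} (hw : ‖w‖ = 1) :
    ∃ θ : ℝ, (0 ≤ θ ∧ θ < 1) ∧ w = expTwoPiI θ := by
  set t := w.arg / (2 * Real.pi)
  refine ⟨Int.fract t, ⟨Int.fract_nonneg t, Int.fract_lt_one t⟩, ?_⟩
  rw [Int.fract, Complex.ofReal_sub, Complex.ofReal_intCast, sub_eq_add_neg, ← Int.cast_neg,
    expTwoPiI_add_intCast, expTwoPiI]
  conv_lhs => rw [← Complex.norm_mul_exp_arg_mul_I w, hw, Complex.ofReal_one, one_mul]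
  congr 1
  simp only [t, Complex.ofReal_div, Complex.ofReal_mul, Complex.ofReal_ofNat]
  field_simp

lemma eq_of_expTwoPiI_eq {θ θ' : ℝ} (hθ : 0 ≤ θ ∧ θ < 1) (hθ' : 0 ≤ θ' ∧ θ' < 1)
    (h : expTwoPiI θ = expTwoPiI θ') : θ = θ' := by
  obtain ⟨k, hk⟩ := expTwoPiI_eq_expTwoPiI_iff.mp h
  have hk : θ - θ' = k := by
    rw [sub_eq_iff_eq_add']
    exact_mod_cast hk
  rw [← Int.fract_eq_self.mpr hθ, ← Int.fract_eq_self.mpr hθ', Int.fract_eq_fract.mpr ⟨k, hk⟩]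

lemma exists_lt_expTwoPiI_div_of_pow_eq {w t : ℂ} {N : ℕ} (hN : N ≠ 0)
    (h : w ^ N = expTwoPiI t) : ∃ c < N, w = expTwoPiI ((t + c) / N) := by
  have : NeZero N := ⟨hN⟩
  have hN' : (N : ℂ) ≠ 0 := Nat.cast_ne_zero.mpr hN
  have hroot : (w * expTwoPiI (-t / N)) ^ N = 1 := by
    rw [mul_pow, ← expTwoPiI_natCast_mul, h, mul_div_cancel₀ _ hN', ← expTwoPiI_add,
      add_neg_cancel, expTwoPiI_zero]
  obtain ⟨c, hc, hcw⟩ := (isPrimitiveRoot_exp N hN).eq_pow_of_pow_eq_one hroot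
  refine ⟨c, hc, ?_⟩
  have hc' : w * expTwoPiI (-t / N) = expTwoPiI (c / N) := by
    rw [← hcw, ← exp_nat_mul, expTwoPiI]
    ring_nf
  calc w = w * expTwoPiI (-t / N) * expTwoPiI (t / N) := by
        rw [mul_assoc, ← expTwoPiI_add, neg_div, neg_add_cancel, expTwoPiI_zero, mul_one]
    _ = expTwoPiI ((t + c) / N) := by
        rw [hc', ← expTwoPiI_add, add_div, add_comm]

lemma dvd_sub_of_expTwoPiI_div_eq {t : ℂ} {a b : ℤ} {N : ℕ} (hN : N ≠ 0)
    (h : expTwoPiI ((t + a) / N) = expTwoPiI ((t + b) / N)) : (N : ℤ) ∣ b - a := by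
  obtain ⟨k, hk⟩ := expTwoPiI_eq_expTwoPiI_iff.mp h
  refine ⟨-k, ?_⟩
  have : ((b - a : ℤ) : ℂ) = ((N * -k : ℤ) : ℂ) := by
    field_simp at hk
    push_cast
    linear_combination -hk
  exact_mod_cast this

def powDenomSubgroup (r : ℕ) [NeZero r] : AddSubgroup ℚ where
  carrier := {x | ∃ (m : ℤ) (n : ℕ), x = (m : ℚ) / (r : ℚ) ^ n}
  add_mem' := by
    rintro _ _ ⟨m, n, rfl⟩ ⟨m', n', rfl⟩
    have hr : (r : ℚ) ≠ 0 := Nat.cast_ne_zero.mpr (NeZero.ne r)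
    refine ⟨m * r ^ n' + m' * r ^ n, n + n', ?_⟩
    rw [pow_add]
    push_cast
    field_simp
  zero_mem' := ⟨0, 0, by simp⟩
  neg_mem' := by
    rintro _ ⟨m, n, rfl⟩
    exact ⟨-m, n, by push_cast; ring⟩

lemma tendsto_zpow_neg_natCast_atTop {r : ℝ} (hr : 1 < r) :
    Filter.Tendsto (fun n : ℕ => r ^ (-n : ℤ)) Filter.atTop (nhds 0) := by
  simp_rw [zpow_neg, zpow_natCast, ← inv_pow]
  exact tendsto_pow_atTop_nhds_zero_of_lt_one (by positivity) (inv_lt_one_of_one_lt₀ hr)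

section Padic

variable {p : ℕ} [Fact p.Prime]

lemma one_lt_natCast_prime : (1 : ℝ) < p := Nat.one_lt_cast.mpr (Fact.out : p.Prime).one_lt

lemma exists_intCast_eq_of_mem_powDenomSubgroup {x : ℚ} (hx : x ∈ powDenomSubgroup p)
    (h : ‖(x : ℚ_[p])‖ ≤ 1) : ∃ K : ℤ, x = K := by
  obtain ⟨m, n, rfl⟩ := hx
  have hp : (0 : ℝ) < p := Nat.cast_pos.mpr (Fact.out : p.Prime).pos
  push_cast at h
  rw [norm_div, norm_pow, Padic.norm_p, div_le_one (by positivity), inv_pow, ← zpow_natCast,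
    ← zpow_neg, Padic.norm_int_le_pow_iff_dvd] at h
  obtain ⟨K, rfl⟩ := h
  refine ⟨K, ?_⟩
  have : (p : ℚ) ^ n ≠ 0 := pow_ne_zero _ (Nat.cast_ne_zero.mpr (Fact.out : p.Prime).ne_zero)
  push_cast
  field_simp

lemma PadicInt.norm_intCast_sub_le_of_dvd {a b : ℤ} {n : ℕ} (h : (p : ℤ) ^ n ∣ a - b) :
    ‖(a : ℤ_[p]) - b‖ ≤ (p : ℝ) ^ (-n : ℤ) := by
  rwa [← Int.cast_sub, PadicInt.norm_int_le_pow_iff_dvd]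

lemma PadicInt.exists_forall_norm_sub_le_of_dvd (c : ℕ → ℤ)
    (hc : ∀ n n', n ≤ n' → (p : ℤ) ^ n ∣ c n' - c n) :
    ∃ z : ℤ_[p], ∀ n, ‖z - c n‖ ≤ (p : ℝ) ^ (-n : ℤ) := by
  have hmono : Antitone fun n : ℕ => (p : ℝ) ^ (-n : ℤ) := fun n n' h =>
    zpow_le_zpow_right₀ one_lt_natCast_prime.le (by omega)
  have hclose : ∀ n n', n ≤ n' → ‖(c n' : ℤ_[p]) - c n‖ ≤ (p : ℝ) ^ (-n : ℤ) :=
    fun n n' h => norm_intCast_sub_le_of_dvd (p := p) (hc n n' h)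
  have hcauchy : CauchySeq fun n => (c n : ℤ_[p]) := by
    refine cauchySeq_of_le_tendsto_0 _ (fun n m N hn hm => ?_)
      (tendsto_zpow_neg_natCast_atTop (one_lt_natCast_prime (p := p)))
    rw [dist_eq_norm]
    rcases le_total n m with h | h
    · rw [norm_sub_rev]; exact (hclose n m h).trans (hmono hn)
    · exact (hclose m n h).trans (hmono hm)
  obtain ⟨z, hz⟩ := cauchySeq_tendsto_of_complete hcauchy
  refine ⟨z, fun n => le_of_tendsto ((hz.sub_const _).norm) ?_⟩
  filter_upwards [Filter.eventually_ge_atTop n] with n' h using hclose n n' h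

lemma PadicInt.eq_of_forall_norm_sub_le {x y : ℤ_[p]}
    (h : ∀ n : ℕ, ‖x - y‖ ≤ (p : ℝ) ^ (-n : ℤ)) : x = y :=
  sub_eq_zero.mp <| norm_eq_zero.mp <|
    le_antisymm (ge_of_tendsto' (tendsto_zpow_neg_natCast_atTop (one_lt_natCast_prime (p := p))) h)
      (norm_nonneg _)

lemma PadicInt.natCast_eq_of_norm_sub_le {m m' N : ℕ} (hm : m < p ^ N) (hm' : m' < p ^ N)
    (h : ‖(m : ℤ_[p]) - m'‖ ≤ (p : ℝ) ^ (-N : ℤ)) : m = m' := by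
  have : (m : ℤ) ≡ m' [ZMOD (p ^ N : ℕ)] := by
    rw [Int.modEq_iff_dvd, Nat.cast_pow, ← PadicInt.norm_int_le_pow_iff_dvd, ← norm_neg]
    push_cast
    simpa using h
  exact (Int.natCast_modEq_iff.mp this).eq_of_lt_of_lt hm hm'

lemma PadicInt.exists_forall_norm_sub_le_of_lt (L : ℕ∞) (c : ℕ → ℕ) (hclt : ∀ n, c n < p ^ n)
    (hc : ∀ n n' : ℕ, n ≤ n' → (n' : ℕ∞) ≤ L → (p : ℤ) ^ n ∣ c n' - c n) :
    ∃ z : ℤ_[p], (∀ n : ℕ, (n : ℕ∞) ≤ L → ‖z - (c n : ℤ)‖ ≤ (p : ℝ) ^ (-n : ℤ)) ∧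
      ∀ N : ℕ, L = N → ∃ m < p ^ N, z = m := by
  cases L with
  | top =>
    obtain ⟨z, hz⟩ := exists_forall_norm_sub_le_of_dvd (p := p) (fun n => c n)
      fun n n' h => hc n n' h le_top
    exact ⟨z, fun n _ => hz n, fun N hN => absurd hN (ENat.top_ne_natCast N)⟩
  | coe L =>
    refine ⟨c L, fun n hn => ?_, fun N hN => ⟨c L, ?_, rfl⟩⟩
    · simpa using norm_intCast_sub_le_of_dvd (p := p) (hc n L (mod_cast hn) le_rfl)
    · exact (ENat.natCast_inj.mp hN) ▸ hclt L

lemma PadicInt.eq_of_forall_norm_sub_le_of_lt (L : ℕ∞) {x y : ℤ_[p]}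
    (h : ∀ n : ℕ, (n : ℕ∞) ≤ L → ‖x - y‖ ≤ (p : ℝ) ^ (-n : ℤ))
    (hx : ∀ N : ℕ, L = N → ∃ m < p ^ N, x = m) (hy : ∀ N : ℕ, L = N → ∃ m < p ^ N, y = m) :
    x = y := by
  cases L with
  | top => exact eq_of_forall_norm_sub_le fun n => h n le_top
  | coe L =>
    obtain ⟨m, hm, rfl⟩ := hx L rfl
    obtain ⟨m', hm', rfl⟩ := hy L rfl
    rw [natCast_eq_of_norm_sub_le hm hm' (h L le_rfl)]

end Padic

lemma norm_sub_le_max_norm_sub {S : Type*} [SeminormedAddCommGroup S] [IsUltrametricDist S]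
    (a b c : S) : ‖a - b‖ ≤ max ‖a - c‖ ‖c - b‖ := by
  simpa only [dist_eq_norm] using IsUltrametricDist.dist_triangle_max a c b

lemma Finsupp.exists_sum_eq_intCast {α : Type*} (f : α →₀ ℚ) (hf : ∀ a, ∃ K : ℤ, f a = K) :
    ∃ K : ℤ, (f.sum fun _ x => x) = K := by
  choose K hK using hf
  exact ⟨∑ a ∈ f.support, K a, by simp [Finsupp.sum, hK]⟩

/-- `f p` lies in `ℤ[1/p]` and is congruent to `q z_p` modulo `ℤ_p`: it is the `p`-adic
fractional part `{q z_p}_p` up to an integer. -/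
def IsFractPartFamily (q : ℚ) (z : (p : Nat.Primes) → ℤ_[(p : ℕ)]) (f : Nat.Primes →₀ ℚ) :
    Prop :=
  (∀ p : Nat.Primes, f p ∈ powDenomSubgroup p) ∧
    ∀ p : Nat.Primes, ‖(q : ℚ_[(p : ℕ)]) * (z p : ℚ_[(p : ℕ)]) - (f p : ℚ_[(p : ℕ)])‖ ≤ 1

namespace IsFractPartFamily

variable {z : (p : Nat.Primes) → ℤ_[(p : ℕ)]} {q q' : ℚ} {f g : Nat.Primes →₀ ℚ}

lemma zero : IsFractPartFamily 0 z 0 :=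
  ⟨fun _ => zero_mem _, fun _ => by simp⟩

lemma one : IsFractPartFamily 1 z 0 :=
  ⟨fun _ => zero_mem _, fun p => by simpa using PadicInt.norm_le_one (z p)⟩

lemma add (hf : IsFractPartFamily q z f) (hg : IsFractPartFamily q' z g) :
    IsFractPartFamily (q + q') z (f + g) := by
  refine ⟨fun p => add_mem (hf.1 p) (hg.1 p), fun p => ?_⟩
  have : ((q + q' : ℚ) : ℚ_[(p : ℕ)]) * z p - ((f + g) p : ℚ)
      = ((q : ℚ_[(p : ℕ)]) * z p - f p) + ((q' : ℚ_[(p : ℕ)]) * z p - g p) := by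
    rw [Finsupp.add_apply]
    push_cast
    ring
  rw [this]
  exact (IsUltrametricDist.norm_add_le_max _ _).trans (max_le (hf.2 p) (hg.2 p))

lemma neg (hf : IsFractPartFamily q z f) : IsFractPartFamily (-q) z (-f) := by
  refine ⟨fun p => neg_mem (hf.1 p), fun p => ?_⟩
  have : ((-q : ℚ) : ℚ_[(p : ℕ)]) * z p - ((-f) p : ℚ) = -((q : ℚ_[(p : ℕ)]) * z p - f p) := by
    rw [Finsupp.neg_apply]
    push_cast
    ring
  rw [this, norm_neg]
  exact hf.2 p

lemma exists_sum_eq_add_intCast (hf : IsFractPartFamily q z f) (hg : IsFractPartFamily q z g) :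
    ∃ K : ℤ, (f.sum fun _ x => x) = (g.sum fun _ x => x) + K := by
  obtain ⟨K, hK⟩ := (f - g).exists_sum_eq_intCast fun p => by
    refine exists_intCast_eq_of_mem_powDenomSubgroup (sub_mem (hf.1 p) (hg.1 p)) ?_
    have := norm_sub_le_max_norm_sub ((f p : ℚ_[(p : ℕ)])) (g p) ((q : ℚ_[(p : ℕ)]) * z p)
    rw [norm_sub_rev (f p : ℚ_[(p : ℕ)]) ((q : ℚ_[(p : ℕ)]) * z p)] at this
    rw [Finsupp.sub_apply, Rat.cast_sub]
    exact this.trans (max_le (hf.2 p) (hg.2 p))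
  refine ⟨K, ?_⟩
  rw [← hK, Finsupp.sum_sub_index fun _ _ _ => rfl]
  ring

end IsFractPartFamily

lemma isFractPartFamily_single {z : (p : Nat.Primes) → ℤ_[(p : ℕ)]} {p : Nat.Primes} {n : ℕ}
    {M : ℤ} (h : ‖z p - M‖ ≤ ((p : ℕ) : ℝ) ^ (-n : ℤ)) :
    IsFractPartFamily (1 / ((p : ℕ) : ℚ) ^ n) z (Finsupp.single p (M / ((p : ℕ) : ℚ) ^ n)) := by
  refine ⟨fun r => ?_, fun r => ?_⟩
  · rcases eq_or_ne p r with rfl | hpr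
    · rw [Finsupp.single_eq_same]
      exact ⟨M, n, rfl⟩
    · rw [Finsupp.single_eq_of_ne hpr.symm]
      exact zero_mem _
  · rcases eq_or_ne p r with rfl | hpr
    · have hp : (0 : ℝ) < (p : ℕ) := Nat.cast_pos.mpr p.2.pos
      have : ((1 / ((p : ℕ) : ℚ) ^ n : ℚ) : ℚ_[(p : ℕ)]) * z p
            - ((Finsupp.single p (M / ((p : ℕ) : ℚ) ^ n) p : ℚ) : ℚ_[(p : ℕ)])
          = ((z p - M : ℤ_[(p : ℕ)]) : ℚ_[(p : ℕ)]) / ((p : ℕ) : ℚ_[(p : ℕ)]) ^ n := by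
        rw [Finsupp.single_eq_same]
        push_cast
        ring
      rw [this, norm_div, norm_pow, Padic.norm_p, PadicInt.padic_norm_e_of_padicInt,
        div_le_one (by positivity), inv_pow, ← zpow_natCast, ← zpow_neg]
      exact h
    · have hp : ‖((p : ℕ) : ℚ_[(r : ℕ)])‖ = 1 := Padic.norm_natCast_eq_one_iff.mpr
        ((Nat.coprime_primes r.2 p.2).mpr fun h => hpr (Subtype.ext h).symm)
      rw [Finsupp.single_eq_of_ne hpr.symm, Rat.cast_zero, sub_zero, norm_mul,
        PadicInt.padic_norm_e_of_padicInt]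
      push_cast
      rw [norm_div, norm_one, norm_pow, hp, one_pow, div_one, one_mul]
      exact PadicInt.norm_le_one _

lemma natCast_pow_sub_mul_one_div_pow {p n n' : ℕ} (hp : p ≠ 0) (hn : n ≤ n') :
    ((p ^ (n' - n) : ℕ) : ℚ) * (1 / (p : ℚ) ^ n') = 1 / (p : ℚ) ^ n := by
  have hp : (p : ℚ) ≠ 0 := Nat.cast_ne_zero.mpr hp
  rw [Nat.cast_pow, ← div_eq_mul_one_div, div_eq_div_iff (pow_ne_zero _ hp) (pow_ne_zero _ hp),
    one_mul, ← pow_add, Nat.sub_add_cancel hn]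

namespace Qgrp

variable {ℓ : Nat.Primes → ℕ∞}

lemma one_div_pow_mem {p : Nat.Primes} {n : ℕ} (h : (n : ℕ∞) ≤ ℓ p) :
    1 / ((p : ℕ) : ℚ) ^ n ∈ Qgrp ℓ :=
  AddSubgroup.subset_closure ⟨p, n, h, rfl⟩

lemma one_mem (ℓ : Nat.Primes → ℕ∞) : (1 : ℚ) ∈ Qgrp ℓ := by
  simpa using one_div_pow_mem (ℓ := ℓ) (p := ⟨2, Nat.prime_two⟩) (n := 0) bot_le

def Represents (ψ : AddChar (Qgrp ℓ) ℂ) (θ : ℝ) (z : (p : Nat.Primes) → ℤ_[(p : ℕ)]) : Prop :=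
  ∀ q : Qgrp ℓ, ∃ f : Nat.Primes →₀ ℚ, IsFractPartFamily q z f ∧
    ψ q = expTwoPiI ((q : ℚ) * θ + (f.sum fun _ x => x : ℚ))

variable (ψ : AddChar (Qgrp ℓ) ℂ)

lemma exists_lt_map_one_div_pow_eq {θ : ℂ} (hθ : ψ ⟨1, one_mem ℓ⟩ = expTwoPiI θ)
    {p : Nat.Primes} {n : ℕ} (h : (n : ℕ∞) ≤ ℓ p) :
    ∃ c < (p : ℕ) ^ n, ψ ⟨_, one_div_pow_mem h⟩ = expTwoPiI ((θ + c) / ((p : ℕ) : ℂ) ^ n) := by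
  have hsmul : ((p : ℕ) ^ n) • (⟨_, one_div_pow_mem h⟩ : Qgrp ℓ) = ⟨1, one_mem ℓ⟩ :=
    Subtype.ext <| by simp
  obtain ⟨c, hc, hψ⟩ := exists_lt_expTwoPiI_div_of_pow_eq (w := ψ ⟨_, one_div_pow_mem h⟩)
    (pow_ne_zero n p.2.ne_zero)
    (by rw [← AddChar.map_nsmul_eq_pow, hsmul, hθ])
  exact ⟨c, hc, by simpa using hψ⟩

lemma map_one_div_pow_of_le {t : ℂ} {p : Nat.Primes} {n n' : ℕ} (hn : n ≤ n')
    (h : (n : ℕ∞) ≤ ℓ p) (h' : (n' : ℕ∞) ≤ ℓ p)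
    (hψ : ψ ⟨_, one_div_pow_mem h'⟩ = expTwoPiI (t / ((p : ℕ) : ℂ) ^ n')) :
    ψ ⟨_, one_div_pow_mem h⟩ = expTwoPiI (t / ((p : ℕ) : ℂ) ^ n) := by
  have hsmul :
      ((p : ℕ) ^ (n' - n)) • (⟨_, one_div_pow_mem h'⟩ : Qgrp ℓ) = ⟨_, one_div_pow_mem h⟩ :=
    Subtype.ext <| by simpa using natCast_pow_sub_mul_one_div_pow (p := p) p.2.ne_zero hn
  have hp : ((p : ℕ) : ℂ) ≠ 0 := Nat.cast_ne_zero.mpr p.2.ne_zero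
  rw [← hsmul, AddChar.map_nsmul_eq_pow, hψ, ← expTwoPiI_natCast_mul]
  congr 1
  rw [Nat.cast_pow, ← pow_sub_mul_pow _ hn]
  field_simp

lemma dvd_sub_of_map_one_div_pow_eq {t : ℂ} {a b : ℤ} {p : Nat.Primes} {n n' : ℕ} (hn : n ≤ n')
    (h : (n : ℕ∞) ≤ ℓ p) (h' : (n' : ℕ∞) ≤ ℓ p)
    (ha : ψ ⟨_, one_div_pow_mem h⟩ = expTwoPiI ((t + a) / ((p : ℕ) : ℂ) ^ n))
    (hb : ψ ⟨_, one_div_pow_mem h'⟩ = expTwoPiI ((t + b) / ((p : ℕ) : ℂ) ^ n')) :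
    ((p : ℕ) : ℤ) ^ n ∣ b - a := by
  have := ha.symm.trans (map_one_div_pow_of_le ψ hn h h' hb)
  simpa using dvd_sub_of_expTwoPiI_div_eq (N := (p : ℕ) ^ n) (pow_ne_zero n p.2.ne_zero)
    (by simpa using this)

variable {ψ}

lemma Represents.exists_map_one_div_pow_eq {θ : ℝ} {z : (p : Nat.Primes) → ℤ_[(p : ℕ)]}
    (hrep : Represents ψ θ z) {p : Nat.Primes} {n : ℕ} (h : (n : ℕ∞) ≤ ℓ p) :
    ∃ M : ℤ, ‖z p - M‖ ≤ ((p : ℕ) : ℝ) ^ (-n : ℤ) ∧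
      ψ ⟨_, one_div_pow_mem h⟩ = expTwoPiI ((θ + M) / ((p : ℕ) : ℂ) ^ n) := by
  have hM : ‖z p - ((z p).appr n : ℤ)‖ ≤ ((p : ℕ) : ℝ) ^ (-n : ℤ) := by
    simpa using (PadicInt.norm_le_pow_iff_mem_span_pow _ _).mpr (PadicInt.appr_spec n (z p))
  refine ⟨(z p).appr n, hM, ?_⟩
  obtain ⟨f, hf, hψ⟩ := hrep ⟨_, one_div_pow_mem h⟩
  obtain ⟨K, hK⟩ := hf.exists_sum_eq_add_intCast (isFractPartFamily_single hM)
  rw [hψ, hK, Finsupp.sum_single_index rfl]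
  push_cast
  rw [← add_assoc, expTwoPiI_add_intCast]
  congr 1
  ring

lemma Represents.map_one {θ : ℝ} {z : (p : Nat.Primes) → ℤ_[(p : ℕ)]}
    (hrep : Represents ψ θ z) : ψ ⟨1, one_mem ℓ⟩ = expTwoPiI θ := by
  obtain ⟨f, hf, hψ⟩ := hrep ⟨1, one_mem ℓ⟩
  obtain ⟨K, hK⟩ := hf.exists_sum_eq_add_intCast IsFractPartFamily.one
  rw [hψ, hK]
  simpa using expTwoPiI_add_intCast θ K

lemma Represents.norm_sub_le {θ : ℝ} {z₁ z₂ : (p : Nat.Primes) → ℤ_[(p : ℕ)]}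
    (h₁ : Represents ψ θ z₁) (h₂ : Represents ψ θ z₂) {p : Nat.Primes} {n : ℕ}
    (h : (n : ℕ∞) ≤ ℓ p) : ‖z₁ p - z₂ p‖ ≤ ((p : ℕ) : ℝ) ^ (-n : ℤ) := by
  obtain ⟨M₁, hM₁, hψ₁⟩ := h₁.exists_map_one_div_pow_eq h
  obtain ⟨M₂, hM₂, hψ₂⟩ := h₂.exists_map_one_div_pow_eq h
  have hM : ‖(M₁ : ℤ_[(p : ℕ)]) - M₂‖ ≤ ((p : ℕ) : ℝ) ^ (-n : ℤ) :=
    PadicInt.norm_intCast_sub_le_of_dvd (dvd_sub_of_map_one_div_pow_eq ψ le_rfl h h hψ₂ hψ₁)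
  refine (norm_sub_le_max_norm_sub _ _ (M₁ : ℤ_[(p : ℕ)])).trans (max_le hM₁ ?_)
  refine (norm_sub_le_max_norm_sub _ _ (M₂ : ℤ_[(p : ℕ)])).trans (max_le hM ?_)
  rwa [norm_sub_rev]

lemma represents_of_forall_map_one_div_pow_eq {θ : ℝ} {z : (p : Nat.Primes) → ℤ_[(p : ℕ)]}
    (hz : ∀ (p : Nat.Primes) (n : ℕ) (h : (n : ℕ∞) ≤ ℓ p), ∃ M : ℤ,
      ‖z p - M‖ ≤ ((p : ℕ) : ℝ) ^ (-n : ℤ) ∧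
        ψ ⟨_, one_div_pow_mem h⟩ = expTwoPiI ((θ + M) / ((p : ℕ) : ℂ) ^ n)) :
    Represents ψ θ z := by
  rintro ⟨x, hx⟩
  induction hx using AddSubgroup.closure_induction with
  | mem x hx =>
    obtain ⟨p, n, h, rfl⟩ := hx
    obtain ⟨M, hM, hψ⟩ := hz p n h
    refine ⟨_, isFractPartFamily_single hM, ?_⟩
    rw [hψ, Finsupp.sum_single_index rfl]
    congr 1
    push_cast
    ring
  | zero => exact ⟨0, IsFractPartFamily.zero, show ψ 0 = _ by simp [expTwoPiI_zero]⟩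
  | add a b ha hb iha ihb =>
    obtain ⟨f, hf, hψf⟩ := iha
    obtain ⟨g, hg, hψg⟩ := ihb
    refine ⟨f + g, hf.add hg, ?_⟩
    rw [show (⟨a + b, _⟩ : Qgrp ℓ) = ⟨a, ha⟩ + ⟨b, hb⟩ from rfl, AddChar.map_add_eq_mul, hψf, hψg,
      ← expTwoPiI_add, Finsupp.sum_add_index' (fun _ => rfl) (fun _ _ _ => rfl)]
    congr 1
    push_cast
    ring
  | neg a ha iha =>
    obtain ⟨f, hf, hψf⟩ := iha
    refine ⟨-f, hf.neg, ?_⟩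
    rw [show (⟨-a, _⟩ : Qgrp ℓ) = -⟨a, ha⟩ from rfl, AddChar.map_neg_eq_inv, hψf,
      ← expTwoPiI_neg, Finsupp.sum_neg_index fun _ => rfl]
    congr 1
    simp [Finsupp.sum]
    ring

variable (ψ)

theorem exists_represents {θ : ℝ} (hθ : ψ ⟨1, one_mem ℓ⟩ = expTwoPiI θ) :
    ∃ z : (p : Nat.Primes) → ℤ_[(p : ℕ)],
      (∀ (p : Nat.Primes) (N : ℕ), ℓ p = N → ∃ m < (p : ℕ) ^ N, z p = m) ∧ Represents ψ θ z := by
  have hc : ∀ (p : Nat.Primes) (n : ℕ), ∃ c < (p : ℕ) ^ n, ∀ h : (n : ℕ∞) ≤ ℓ p,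
      ψ ⟨_, one_div_pow_mem h⟩ = expTwoPiI ((θ + c) / ((p : ℕ) : ℂ) ^ n) := by
    intro p n
    by_cases h : (n : ℕ∞) ≤ ℓ p
    · obtain ⟨c, hc, hψ⟩ := exists_lt_map_one_div_pow_eq ψ hθ h
      exact ⟨c, hc, fun _ => hψ⟩
    · exact ⟨0, pow_pos p.2.pos n, fun h' => absurd h' h⟩
  choose c hclt hψc using hc
  have hz (p : Nat.Primes) := PadicInt.exists_forall_norm_sub_le_of_lt (ℓ p) (c p) (hclt p)
    fun n n' hn h' => by
      have h := (Nat.cast_le.mpr hn).trans h'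
      simpa using dvd_sub_of_map_one_div_pow_eq ψ (a := c p n) (b := c p n') hn h h'
        (by simpa using hψc p n h) (by simpa using hψc p n' h')
  choose z hzc hzfin using hz
  exact ⟨z, hzfin, represents_of_forall_map_one_div_pow_eq fun p n h =>
    ⟨c p n, hzc p n h, by simpa using hψc p n h⟩⟩

end Qgrp

/-- Every character `χ` of `Q_{(ℓ_p)}` has the form
`χ(q) = exp(2πi(qθ + Σ_p {q z_p}_p))` for a unique `θ ∈ [0,1)` and unique `z_p ∈ ℤ_p`
(with `0 ≤ z_p < p^{ℓ_p}` when `ℓ_p < ∞`). The fractional parts are encoded by a finitely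
supported family `f` of rationals with `p`-power denominators with `q z_p − f_p ∈ ℤ_p`. -/
theorem stmt14 (ℓ : Nat.Primes → ℕ∞) (χ : Qgrp ℓ → ℂ)
    (hmul : ∀ x y : Qgrp ℓ, χ (x + y) = χ x * χ y)
    (hnorm : ∀ x : Qgrp ℓ, ‖χ x‖ = 1) :
    ∃! θz : ℝ × ((p : Nat.Primes) → ℤ_[(p : ℕ)]),
      (0 ≤ θz.1 ∧ θz.1 < 1) ∧
      (∀ p : Nat.Primes, ∀ n : ℕ, ℓ p = (n : ℕ∞) →
        ∃ m : ℕ, m < (p : ℕ) ^ n ∧ θz.2 p = (m : ℤ_[(p : ℕ)])) ∧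
      (∀ q : Qgrp ℓ, ∃ f : Nat.Primes →₀ ℚ,
        (∀ p : Nat.Primes, ∃ (m : ℤ) (n : ℕ), f p = (m : ℚ) / ((p : ℕ) : ℚ) ^ n) ∧
        (∀ p : Nat.Primes,
          ‖((q : ℚ) : ℚ_[(p : ℕ)]) * ((θz.2 p : ℤ_[(p : ℕ)]) : ℚ_[(p : ℕ)]) -
            ((f p : ℚ) : ℚ_[(p : ℕ)])‖ ≤ 1) ∧
        χ q = Complex.exp (2 * (Real.pi : ℂ) * Complex.I *
          (((q : ℚ) : ℂ) * ((θz.1 : ℝ) : ℂ) + ((f.sum fun _ x => x : ℚ) : ℂ)))) := by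
  have hχ0 : χ 0 = 1 := by
    have hne : χ 0 ≠ 0 := fun h => by simpa [h] using hnorm 0
    simpa [hne] using (hmul 0 0).symm
  let ψ : AddChar (Qgrp ℓ) ℂ := ⟨χ, hχ0, hmul⟩
  obtain ⟨θ, hθ, hψθ⟩ := exists_mem_Ico_expTwoPiI_eq (hnorm ⟨1, Qgrp.one_mem ℓ⟩)
  obtain ⟨z, hzfin, hrep⟩ := Qgrp.exists_represents ψ hψθ
  refine ⟨(θ, z), ⟨hθ, hzfin, fun q => ?_⟩, ?_⟩
  · obtain ⟨f, ⟨hf₁, hf₂⟩, hψ⟩ := hrep q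
    exact ⟨f, hf₁, hf₂, hψ⟩
  · rintro ⟨θ', z'⟩ ⟨hθ', hz'fin, hrep'⟩
    replace hrep' : Qgrp.Represents ψ θ' z' := fun q =>
      let ⟨f, hf₁, hf₂, hψ⟩ := hrep' q
      ⟨f, ⟨hf₁, hf₂⟩, hψ⟩
    obtain rfl : θ' = θ := eq_of_expTwoPiI_eq hθ' hθ (hrep'.map_one.symm.trans hψθ)
    congr
    funext p
    exact PadicInt.eq_of_forall_norm_sub_le_of_lt (ℓ p) (fun n h => hrep'.norm_sub_le hrep h)
      (hz'fin p) (hzfin p)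
end
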